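/- For any graphs G and H, γ_R(G □ H) ≥ (γ(G)·γ_R(H) + γ(G □ H))/2. -/

import Mathlib

open Finset

/-- A set `S` is a dominating set of `G` if every vertex outside `S` has a neighbor in `S`. -/
def IsDominatingSet {V : Type*} (G : SimpleGraph V) (S : Set V) : Prop :=
  ∀ v, v ∉ S → ∃ u ∈ S, G.Adj u v

/-- The domination number `γ(G)`. -/
noncomputable def domNum {V : Type*} [Fintype V] (G : SimpleGraph V) : ℕ :=
  sInf {n | ∃ S : Finset V, IsDominatingSet G ↑S ∧ S.card = n}

/-- A Roman dominating function: values in {0,1,2}, every vertex of value 0 has a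
neighbor of value 2. -/
def IsRDF {V : Type*} (G : SimpleGraph V) (f : V → ℕ) : Prop :=
  (∀ v, f v ≤ 2) ∧ ∀ v, f v = 0 → ∃ u, G.Adj u v ∧ f u = 2

/-- The Roman domination number `γ_R(G)`. -/
noncomputable def romanDomNum {V : Type*} [Fintype V] (G : SimpleGraph V) : ℕ :=
  sInf {n | ∃ f : V → ℕ, IsRDF G f ∧ ∑ v, f v = n}

/-- The strong product of graphs. -/
def strongProd {V W : Type*} (G : SimpleGraph V) (H : SimpleGraph W) :
    SimpleGraph (V × W) where
  Adj x y := x ≠ y ∧ (x.1 = y.1 ∨ G.Adj x.1 y.1) ∧ (x.2 = y.2 ∨ H.Adj x.2 y.2)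
  symm := ⟨fun x y => by
    rintro ⟨h, h1, h2⟩
    refine ⟨h.symm, ?_, ?_⟩
    · cases h1 with
      | inl h => exact Or.inl h.symm
      | inr h => exact Or.inr h.symm
    · cases h2 with
      | inl h => exact Or.inl h.symm
      | inr h => exact Or.inr h.symm⟩
  loopless := ⟨fun x => by simp⟩

/-- `G` has an efficient dominating set: a dominating set whose elements have
pairwise disjoint closed neighborhoods. -/
def HasEfficientDomSet {V : Type*} (G : SimpleGraph V) : Prop :=
  ∃ S : Finset V, IsDominatingSet G ↑S ∧
    ∀ u ∈ S, ∀ v ∈ S, u ≠ v →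
      Disjoint (insert u (G.neighborSet u)) (insert v (G.neighborSet v))

/-! Let `f` be a minimum Roman dominating function of `G □ H`, with `n₁` vertices of weight 1
and `n₂` of weight 2. Its support dominates `G □ H`, so `γ(G □ H) ≤ n₁ + n₂`, and it suffices to
show `γ(G) γ_R(H) ≤ n₁ + 3 n₂`.

Fix a minimum dominating set `S` of `G` and a map `r` sending each vertex of `G` to a vertex of
`S` dominating it. For `s ∈ S`, collapsing the copies of `H` over the cell `r⁻¹(s)` turns `f`
into a Roman dominating function of `H`, so the collapsed functions weigh at least
`|S| γ_R(H)` in total. In a layer `G × {h}`, a cell gets the value 2 only if it contains a 2 of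
the layer, and a nonzero value only if it contains a nonzero value of the layer or lies in the
set `B` of cells whose layer vertices are all 0 and dominated within the layer. Exchanging `B`
in `S` for the 2's of the layer still dominates `G`, so minimality of `S` bounds `|B|` by the
number of those 2's, and the layer contributes at most `n₁(h) + 3 n₂(h)`. -/

section

variable {V W : Type*}

lemma sum_eq_card_ne_zero_add_card_eq_two {α : Type*} (s : Finset α) (f : α → ℕ)
    (hf : ∀ a ∈ s, f a ≤ 2) :
    ∑ a ∈ s, f a = #{a ∈ s | f a ≠ 0} + #{a ∈ s | f a = 2} := by
  rw [card_filter, card_filter, ← sum_add_distrib]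
  refine sum_congr rfl fun a ha => ?_
  have := hf a ha
  split_ifs <;> omega

section Domination

variable [Fintype V] {G : SimpleGraph V}

lemma domNum_le_card {S : Finset V} (hS : IsDominatingSet G S) : domNum G ≤ #S :=
  Nat.sInf_le ⟨S, hS, rfl⟩

variable (G) in
lemma exists_isDominatingSet_card_eq_domNum :
    ∃ S : Finset V, IsDominatingSet G S ∧ #S = domNum G := by
  show domNum G ∈ {n | ∃ S : Finset V, IsDominatingSet G ↑S ∧ #S = n}
  exact Nat.sInf_mem ⟨_, univ, fun v hv => absurd (mem_univ v) hv, rfl⟩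

lemma romanDomNum_le_sum {f : V → ℕ} (hf : IsRDF G f) : romanDomNum G ≤ ∑ v, f v :=
  Nat.sInf_le ⟨f, hf, rfl⟩

variable (G) in
lemma exists_isRDF_sum_eq_romanDomNum :
    ∃ f : V → ℕ, IsRDF G f ∧ ∑ v, f v = romanDomNum G := by
  show romanDomNum G ∈ {n | ∃ f : V → ℕ, IsRDF G f ∧ ∑ v, f v = n}
  exact Nat.sInf_mem
    ⟨_, fun _ => 1, ⟨fun _ => one_le_two, fun _ h => absurd h one_ne_zero⟩, rfl⟩

lemma card_le_card_of_isDominatingSet_sdiff_union [DecidableEq V] {S B D : Finset V}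
    (hS : #S ≤ domNum G) (hB : B ⊆ S) (hdom : IsDominatingSet G ↑(S \ B ∪ D)) : #B ≤ #D := by
  have := (domNum_le_card hdom).trans (card_union_le _ _)
  rw [card_sdiff_of_subset hB] at this
  have := card_le_card hB
  omega

end Domination

lemma IsRDF.isDominatingSet_ne_zero {G : SimpleGraph V} {f : V → ℕ} (hf : IsRDF G f) :
    IsDominatingSet G {v | f v ≠ 0} := by
  intro v hv
  obtain ⟨u, huv, hu⟩ := hf.2 v (by simpa using hv)
  exact ⟨u, by simp [hu], huv⟩

lemma IsDominatingSet.exists_dominator {G : SimpleGraph V} {S : Set V}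
    (hS : IsDominatingSet G S) : ∃ r : V → V, ∀ v, r v ∈ S ∧ (r v = v ∨ G.Adj (r v) v) := by
  classical
  refine ⟨fun v => if hv : v ∈ S then v else (hS v hv).choose, fun v => ?_⟩
  by_cases hv : v ∈ S
  · simp [hv]
  · have hu := (hS v hv).choose_spec
    simp only [dif_neg hv]
    exact ⟨hu.1, Or.inr hu.2⟩

section Collapse

variable (H : SimpleGraph W) (f : V × W → ℕ) (C : Set V) (h : W)

open Classical in
noncomputable def collapse : W → ℕ := fun h =>
  if ∃ g ∈ C, f (g, h) = 2 then 2
  else if ∃ g ∈ C, f (g, h) = 0 ∧ ∃ h', H.Adj h' h ∧ f (g, h') = 2 then 0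
  else 1

lemma collapse_le_two : collapse H f C h ≤ 2 := by
  unfold collapse; split_ifs <;> omega

lemma collapse_eq_two_iff : collapse H f C h = 2 ↔ ∃ g ∈ C, f (g, h) = 2 := by
  unfold collapse; split_ifs <;> simp_all

lemma collapse_eq_zero_iff : collapse H f C h = 0 ↔
    (¬∃ g ∈ C, f (g, h) = 2) ∧ ∃ g ∈ C, f (g, h) = 0 ∧ ∃ h', H.Adj h' h ∧ f (g, h') = 2 := by
  unfold collapse; split_ifs <;> simp_all

lemma isRDF_collapse : IsRDF H (collapse H f C) := by
  refine ⟨collapse_le_two H f C, fun h h0 => ?_⟩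
  obtain ⟨-, g, hg, -, h', hadj, hf2⟩ := (collapse_eq_zero_iff H f C h).1 h0
  exact ⟨h', hadj, (collapse_eq_two_iff H f C h').2 ⟨g, hg, hf2⟩⟩

end Collapse

section Product

variable [Fintype V] {G : SimpleGraph V} {H : SimpleGraph W} {f : V × W → ℕ}

lemma isDominatingSet_sdiff_union_twos [DecidableEq V] (hf : IsRDF (G.boxProd H) f)
    {S : Finset V} {r : V → V} (hr : ∀ v, r v ∈ S ∧ (r v = v ∨ G.Adj (r v) v)) (h : W) :
    IsDominatingSet G ↑(S \ {s ∈ S | collapse H f {g | r g = s} h ≠ 0 ∧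
      ∀ g, r g = s → f (g, h) = 0} ∪ ({g | f (g, h) = 2} : Finset V)) := by
  intro v hv
  set B := {s ∈ S | collapse H f {g | r g = s} h ≠ 0 ∧ ∀ g, r g = s → f (g, h) = 0}
  by_cases hvB : r v ∈ B
  · obtain ⟨-, hcol, hrv⟩ := mem_filter.1 hvB
    obtain ⟨u, hadj, hu⟩ := hf.2 _ (hrv v rfl)
    rcases SimpleGraph.boxProd_adj.1 hadj with ⟨hG, hu2⟩ | ⟨hH, hu1⟩
    · have hu' : f (u.1, h) = 2 := by rwa [show (u.1, h) = u from Prod.ext rfl hu2.symm]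
      exact ⟨u.1, mem_coe.2 (mem_union_right _ (mem_filter.2 ⟨mem_univ _, hu'⟩)), hG⟩
    · have hu' : f (v, u.2) = 2 := by rwa [show (v, u.2) = u from Prod.ext hu1.symm rfl]
      refine absurd ((collapse_eq_zero_iff H f {g | r g = r v} h).2
        ⟨?_, v, rfl, hrv v rfl, u.2, hH, hu'⟩) hcol
      rintro ⟨g, hg, hg2⟩
      simp [hrv g hg] at hg2
  · have hrvD : r v ∈ S \ B ∪ ({g | f (g, h) = 2} : Finset V) :=
      mem_union_left _ (mem_sdiff.2 ⟨(hr v).1, hvB⟩)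
    rcases (hr v).2 with hrv | hrv
    · exact absurd (hrv ▸ hrvD) hv
    · exact ⟨r v, hrvD, hrv⟩

lemma sum_collapse_le (hf : IsRDF (G.boxProd H) f) {S : Finset V} (hS : #S ≤ domNum G)
    {r : V → V} (hr : ∀ v, r v ∈ S ∧ (r v = v ∨ G.Adj (r v) v)) (h : W) :
    ∑ s ∈ S, collapse H f {g | r g = s} h ≤ ∑ g, (f (g, h) + if f (g, h) = 2 then 1 else 0) := by
  classical
  set μ := fun s => collapse H f {g | r g = s} h
  set nz : Finset V := {g | f (g, h) ≠ 0}
  set twos : Finset V := {g | f (g, h) = 2}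
  set B : Finset V := {s ∈ S | μ s ≠ 0 ∧ ∀ g, r g = s → f (g, h) = 0}
  have htwo : #{s ∈ S | μ s = 2} ≤ #twos := by
    refine (card_le_card (t := twos.image r) fun s hs => ?_).trans card_image_le
    obtain ⟨g, hg, hg2⟩ := (collapse_eq_two_iff H f _ h).1 (mem_filter.1 hs).2
    exact mem_image.2 ⟨g, by simpa [twos] using hg2, hg⟩
  have hB : #B ≤ #twos := card_le_card_of_isDominatingSet_sdiff_union hS (filter_subset _ _)
    (isDominatingSet_sdiff_union_twos hf hr h)
  have hnz : #{s ∈ S | μ s ≠ 0} ≤ #nz + #B := by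
    refine (card_le_card (t := nz.image r ∪ B) fun s hs => ?_).trans ((card_union_le _ _).trans
      (Nat.add_le_add_right card_image_le _))
    by_cases hs' : s ∈ nz.image r
    · exact mem_union_left _ hs'
    · obtain ⟨hsS, hμs⟩ := mem_filter.1 hs
      refine mem_union_right _ (mem_filter.2 ⟨hsS, hμs, fun g hg => ?_⟩)
      by_contra hg0
      exact hs' (mem_image.2 ⟨g, by simpa [nz] using hg0, hg⟩)
  calc ∑ s ∈ S, μ s = #{s ∈ S | μ s ≠ 0} + #{s ∈ S | μ s = 2} :=
        sum_eq_card_ne_zero_add_card_eq_two S μ fun s _ => collapse_le_two H f _ h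
    _ ≤ #nz + #twos + #twos := by omega
    _ = ∑ g, (f (g, h) + if f (g, h) = 2 then 1 else 0) := by
        rw [sum_add_distrib, ← card_filter, sum_eq_card_ne_zero_add_card_eq_two univ _
          fun g _ => hf.1 (g, h)]

theorem domNum_mul_romanDomNum_le [Fintype W] (hf : IsRDF (G.boxProd H) f) :
    domNum G * romanDomNum H ≤ ∑ v, f v + #{v | f v = 2} := by
  classical
  obtain ⟨S, hSdom, hS⟩ := exists_isDominatingSet_card_eq_domNum G
  obtain ⟨r, hr⟩ := hSdom.exists_dominator
  calc domNum G * romanDomNum H = ∑ s ∈ S, romanDomNum H := by simp [hS]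
    _ ≤ ∑ s ∈ S, ∑ h, collapse H f {g | r g = s} h :=
        sum_le_sum fun s _ => romanDomNum_le_sum (isRDF_collapse H f _)
    _ = ∑ h, ∑ s ∈ S, collapse H f {g | r g = s} h := sum_comm
    _ ≤ ∑ h, ∑ g, (f (g, h) + if f (g, h) = 2 then 1 else 0) :=
        sum_le_sum fun h _ => sum_collapse_le hf hS.le hr h
    _ = ∑ v, f v + #{v | f v = 2} := by
        rw [← Fintype.sum_prod_type_right', sum_add_distrib, card_filter]

end Product

end

theorem stmt4 {V W : Type*} [Fintype V] [Fintype W]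
    (G : SimpleGraph V) (H : SimpleGraph W) :
    (romanDomNum (G.boxProd H) : ℝ) ≥
      ((domNum G : ℝ) * romanDomNum H + domNum (G.boxProd H)) / 2 := by
  classical
  obtain ⟨f, hf, hw⟩ := exists_isRDF_sum_eq_romanDomNum (G.boxProd H)
  have hweight := sum_eq_card_ne_zero_add_card_eq_two univ f fun v _ => hf.1 v
  have hprod := domNum_mul_romanDomNum_le hf
  have hbox : domNum (G.boxProd H) ≤ #{v | f v ≠ 0} :=
    domNum_le_card (by simpa using hf.isDominatingSet_ne_zero)
  rw [ge_iff_le, div_le_iff₀ two_pos]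
  exact_mod_cast (by omega : domNum G * romanDomNum H + domNum (G.boxProd H) ≤
    romanDomNum (G.boxProd H) * 2)
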